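/- For all n ≥ 1 and X_1,…,X_n ∈ L, the difference pbw(X_1 ⊙ ⋯ ⊙ X_n) − (1/n!) Σ_{σ ∈ S_n} X_{σ(1)}·X_{σ(2)}·⋯·X_{σ(n)} lies in U^{≤ n−1}(L). In other words, the associated graded map of pbw is the symmetrization map Sym : S_A(L) → Gr U(L). -/
import Mathlib

/-! STATEMENT 3: `pbw(X_1⊙⋯⊙X_n) − (1/n!) Σ_{σ∈S_n} X_{σ(1)}⋯X_{σ(n)} ∈ U^{≤n−1}(L)`,
i.e. the associated graded map of `pbw` is the symmetrization map. -/

noncomputable section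

def EMap {L U : Type*} [Ring U] [Algebra ℚ U] (j : L → U) (nab : L → L → L) :
    (n : ℕ) → (Fin n → L) → U
  | 0, _ => 1
  | (n + 1), X =>
      (((n : ℚ) + 1)⁻¹) •
        ((∑ k : Fin (n + 1), j (X k) * EMap j nab n (X ∘ k.succAbove)) -
          ∑ k : Fin (n + 1), ∑ m : Fin n,
            EMap j nab n
              (Function.update (X ∘ k.succAbove) m (nab (X k) (X (k.succAbove m)))))

def Ufil {A L U : Type*} [CommRing A] [Ring U] [Algebra ℚ U]
    (ι : A →+* U) (j : L → U) (n : ℕ) : Submodule ℚ U :=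
  Submodule.span ℚ
    {u | ∃ m ≤ n, ∃ (a : A) (X : Fin m → L),
      u = ι a * (List.ofFn fun i => j (X i)).prod}

section Aux

set_option linter.unusedSectionVars false

variable {A L U : Type*} [CommRing A] [Algebra ℚ A]
    [AddCommGroup L] [Module A L] [Ring U] [Algebra ℚ U]
    (ι : A →+* U) (j : L → U) (ρ : L → A → A) (nab : L → L → L)

lemma Ufil_mono {m n : ℕ} (h : m ≤ n) : Ufil ι j m ≤ Ufil ι j n :=
  Submodule.span_mono (fun _ ⟨k, hk, a, Y, hu⟩ => ⟨k, hk.trans h, a, Y, hu⟩)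

lemma one_mem_Ufil (n : ℕ) : (1 : U) ∈ Ufil ι j n :=
  Submodule.subset_span ⟨0, Nat.zero_le _, 1, Fin.elim0, by simp⟩

lemma mul_mem_Ufil (hcomm : ∀ (X : L) (a : A), j X * ι a = ι a * j X + ι (ρ X a))
    (X : L) {n : ℕ} {u : U} (hu : u ∈ Ufil ι j n) :
    j X * u ∈ Ufil ι j (n + 1) := by
  induction hu using Submodule.span_induction with
  | mem u hu =>
    obtain ⟨m, hm, a, Y, rfl⟩ := hu
    rw [← mul_assoc, hcomm, add_mul, mul_assoc]
    refine Submodule.add_mem _ ?_ ?_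
    · refine Submodule.subset_span ⟨m + 1, Nat.succ_le_succ hm, a, Fin.cons X Y, ?_⟩
      congr 1
      rw [List.ofFn_succ]
      simp
    · exact Submodule.subset_span ⟨m, hm.trans (Nat.le_succ n), ρ X a, Y, rfl⟩
  | zero => simp
  | add x y _ _ hx hy => rw [mul_add]; exact Submodule.add_mem _ hx hy
  | smul q x _ hx => rw [mul_smul_comm]; exact Submodule.smul_mem _ _ hx

lemma EMap_mem_Ufil (hcomm : ∀ (X : L) (a : A), j X * ι a = ι a * j X + ι (ρ X a)) :
    ∀ (n : ℕ) (X : Fin n → L), EMap j nab n X ∈ Ufil ι j n := by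
  intro n
  induction n with
  | zero => intro X; exact one_mem_Ufil ι j 0
  | succ n ih =>
    intro X
    rw [EMap]
    refine Submodule.smul_mem _ _ (Submodule.sub_mem _ ?_ ?_)
    · exact Submodule.sum_mem _ fun k _ => mul_mem_Ufil ι j ρ hcomm _ (ih _)
    · exact Submodule.sum_mem _ fun k _ => Submodule.sum_mem _ fun m _ =>
        Ufil_mono ι j (Nat.le_succ n) (ih _)

lemma inner_sum_reindex (n : ℕ) (X : Fin (n + 1) → L) (p : Fin (n + 1)) :
    ∑ e : Equiv.Perm (Fin n),
        (List.ofFn fun i => j (X (Equiv.swap 0 p ((e i).succ)))).prod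
      = ∑ e : Equiv.Perm (Fin n),
          (List.ofFn fun i => j (X (p.succAbove (e i)))).prod := by
  induction p using Fin.cases with
  | zero => simp [Fin.succAbove_zero]
  | succ q =>
    refine Fintype.sum_equiv (Equiv.mulLeft q.cycleRange) _ _ fun e => ?_
    refine congrArg List.prod (congrArg List.ofFn (funext fun i => ?_))
    rw [← Fin.succAbove_cycleRange]
    rfl

lemma perm_sum_decompose (n : ℕ) (X : Fin (n + 1) → L) :
    ∑ σ : Equiv.Perm (Fin (n + 1)), (List.ofFn fun i => j (X (σ i))).prod
      = ∑ p : Fin (n + 1), ∑ e : Equiv.Perm (Fin n),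
          j (X p) * (List.ofFn fun i => j ((X ∘ p.succAbove) (e i))).prod := by
  have h1 : ∑ σ : Equiv.Perm (Fin (n + 1)), (List.ofFn fun i => j (X (σ i))).prod
      = ∑ pe : Fin (n + 1) × Equiv.Perm (Fin n),
          j (X pe.1) *
            (List.ofFn fun i => j (X (Equiv.swap 0 pe.1 ((pe.2 i).succ)))).prod := by
    refine Fintype.sum_equiv Equiv.Perm.decomposeFin _ _ fun σ => ?_
    obtain ⟨⟨p, e⟩, rfl⟩ := Equiv.Perm.decomposeFin.symm.surjective σ
    rw [Equiv.apply_symm_apply, List.ofFn_succ, List.prod_cons]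
    simp [Equiv.Perm.decomposeFin_symm_apply_zero,
      Equiv.Perm.decomposeFin_symm_apply_succ]
  rw [h1, Fintype.sum_prod_type]
  refine Finset.sum_congr rfl fun p _ => ?_
  dsimp only
  rw [← Finset.mul_sum, ← Finset.mul_sum, inner_sum_reindex j n X p]
  rfl

end Aux

/-- For all `n ≥ 1` (here `n+1` elements, `n : ℕ`), the difference between
`pbw(X_1⊙⋯⊙X_{n+1}) = E_{n+1}(X)` and the symmetrization
`(1/(n+1)!) Σ_{σ} X_{σ(1)}⋯X_{σ(n+1)}` lies in `U^{≤ n}(L)`. -/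
theorem pbw_graded_is_symmetrization
    {A L U : Type*} [CommRing A] [Algebra ℚ A]
    [AddCommGroup L] [Module A L] [Ring U] [Algebra ℚ U]
    (ι : A →+* U) (j : L → U) (ρ : L → A → A) (nab : L → L → L)
    (hj_add : ∀ X Y : L, j (X + Y) = j X + j Y)
    (hj_smul : ∀ (a : A) (X : L), j (a • X) = ι a * j X)
    (hρ_der : ∀ (X : L) (a b : A), ρ X (a * b) = a * ρ X b + b * ρ X a)
    (hcomm : ∀ (X : L) (a : A), j X * ι a = ι a * j X + ι (ρ X a))
    (hnab_smul₁ : ∀ (a : A) (X Y : L), nab (a • X) Y = a • nab X Y)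
    (hnab_smul₂ : ∀ (a : A) (X Y : L), nab X (a • Y) = ρ X a • Y + a • nab X Y)
    (n : ℕ) (X : Fin (n + 1) → L) :
    EMap j nab (n + 1) X -
        ((Nat.factorial (n + 1) : ℚ))⁻¹ •
          ∑ σ : Equiv.Perm (Fin (n + 1)),
            (List.ofFn fun i => j (X (σ i))).prod
      ∈ Ufil ι j n := by
  induction n with
  | zero =>
    have : EMap j nab 1 X -
        ((Nat.factorial 1 : ℚ))⁻¹ •
          ∑ σ : Equiv.Perm (Fin 1), (List.ofFn fun i => j (X (σ i))).prod = 0 := by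
      simp [EMap, List.ofFn_succ, Finset.sum_const, Subsingleton.elim (α := Equiv.Perm (Fin 1)) _ 1]
    rw [this]
    exact Submodule.zero_mem _
  | succ n ih =>
    -- notation
    set c : ℚ := ((Nat.factorial (n + 1) : ℚ))⁻¹ with hc
    have hkey :
        EMap j nab (n + 2) X -
            ((Nat.factorial (n + 2) : ℚ))⁻¹ •
              ∑ σ : Equiv.Perm (Fin (n + 2)),
                (List.ofFn fun i => j (X (σ i))).prod
          = (((n : ℚ) + 2)⁻¹) •
              ((∑ k : Fin (n + 2), j (X k) *
                  (EMap j nab (n + 1) (X ∘ k.succAbove) -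
                    c • ∑ e : Equiv.Perm (Fin (n + 1)),
                      (List.ofFn fun i => j ((X ∘ k.succAbove) (e i))).prod)) -
                ∑ k : Fin (n + 2), ∑ m : Fin (n + 1),
                  EMap j nab (n + 1)
                    (Function.update (X ∘ k.succAbove) m
                      (nab (X k) (X (k.succAbove m))))) := by
      rw [perm_sum_decompose]
      rw [show EMap j nab (n + 2) X =
        ((((n : ℚ) + 1) + 1)⁻¹) •
        ((∑ k : Fin (n + 2), j (X k) * EMap j nab (n + 1) (X ∘ k.succAbove)) -
          ∑ k : Fin (n + 2), ∑ m : Fin (n + 1),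
            EMap j nab (n + 1)
              (Function.update (X ∘ k.succAbove) m (nab (X k) (X (k.succAbove m)))))
        from by rw [EMap]; push_cast; ring_nf]
      have hfac : ((Nat.factorial (n + 2) : ℚ))⁻¹
          = (((n : ℚ) + 2)⁻¹) * c := by
        rw [hc, Nat.factorial_succ (n + 1), ← mul_inv]
        push_cast
        ring_nf
      rw [hfac]
      simp only [mul_sub, Finset.sum_sub_distrib, mul_smul_comm, Finset.mul_sum,
        ← Finset.smul_sum, smul_sub, smul_smul]
      have : (((n : ℚ) + 1) + 1)⁻¹ = (((n : ℚ) + 2))⁻¹ := by norm_num; ring_nf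
      rw [this]
      abel
    rw [hkey]
    refine Submodule.smul_mem _ _ (Submodule.sub_mem _ ?_ ?_)
    · exact Submodule.sum_mem _ fun k _ =>
        mul_mem_Ufil ι j ρ hcomm _ (ih (X ∘ k.succAbove))
    · exact Submodule.sum_mem _ fun k _ => Submodule.sum_mem _ fun m _ =>
        EMap_mem_Ufil ι j ρ nab hcomm (n + 1) _

end
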